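/- Let a, b : ZMod 3 → ℝ³ satisfy Σ_{l} a(l) = 0, Σ_{l} b(l) = 0, and ‖a(x_1) + b(x_2)‖ ≤ 1 for all x_1, x_2 ∈ ZMod 3, and define ρ_{x_1 x_2} = (1/2)(I + (a(x_1)+b(x_2))·σ). For each y ∈ {1,2}, let t_{k|y} ≥ 0 with Σ_{k∈ZMod 3} t_{k|y} = 2 and unit vectors m̂_{k|y} ∈ ℝ³ with Σ_{k} t_{k|y} m̂_{k|y} = 0, and define M_{k|y} = (t_{k|y}/2)(I + m̂_{k|y}·σ). Then the (2,3) POREC success probability of this strategy equals 2/3 − F/12, where F = Σ_{x_1∈ZMod 3} t_{x_1|1}·(a(x_1)·m̂_{x_1|1}) + Σ_{x_2∈ZMod 3} t_{x_2|2}·(b(x_2)·m̂_{x_2|2}). -/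

import Mathlib

/-!
For a Bloch vector `v`, `Re Tr(ρ_v M) = (t/2)(1 + ⟪v, m̂⟫)` when `M = (t/2)(I + m̂·σ)`. Since
`Σ t = 2` and `Σ t m̂ = 0`, each measurement sums to probability one on every state, so the
success summand for question `y` is one minus the probability of the forbidden outcome `x_y`.
Averaging that over the other input kills the cross term (`Σ b = 0` for `y = 1`, `Σ a = 0` for
`y = 2`), which leaves `(1/18)(18 - 6 - (3/2) F) = 2/3 - F/12`.
-/

open Finset

noncomputable section

/-- Pauli matrix `σ_x`. -/
def sigmaX : Matrix (Fin 2) (Fin 2) ℂ := !![0, 1; 1, 0]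

/-- Pauli matrix `σ_y`. -/
def sigmaY : Matrix (Fin 2) (Fin 2) ℂ := !![0, -Complex.I; Complex.I, 0]

/-- Pauli matrix `σ_z`. -/
def sigmaZ : Matrix (Fin 2) (Fin 2) ℂ := !![1, 0; 0, -1]

/-- `v·σ = v₁σ_x + v₂σ_y + v₃σ_z` for `v ∈ ℝ³`. -/
def dotSigma (v : EuclideanSpace ℝ (Fin 3)) : Matrix (Fin 2) (Fin 2) ℂ :=
  v 0 • sigmaX + v 1 • sigmaY + v 2 • sigmaZ

/-- The qubit state with Bloch vector `v`: `(I + v·σ)/2`. -/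
def blochState (v : EuclideanSpace ℝ (Fin 3)) : Matrix (Fin 2) (Fin 2) ℂ :=
  (1 / 2 : ℝ) • ((1 : Matrix (Fin 2) (Fin 2) ℂ) + dotSigma v)

/-- The qubit POVM element `(t/2)(I + m̂·σ)`. -/
def povmElt (t : ℝ) (mhat : EuclideanSpace ℝ (Fin 3)) : Matrix (Fin 2) (Fin 2) ℂ :=
  (t / 2 : ℝ) • ((1 : Matrix (Fin 2) (Fin 2) ℂ) + dotSigma mhat)

open scoped RealInnerProductSpace

lemma re_trace_blochState_mul_povmElt (v m : EuclideanSpace ℝ (Fin 3)) (t : ℝ) :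
    (blochState v * povmElt t m).trace.re = t / 2 * (1 + ⟪v, m⟫) := by
  have hinner : ⟪v, m⟫ = v 0 * m 0 + v 1 * m 1 + v 2 * m 2 := by
    simp [PiLp.inner_apply, Fin.sum_univ_three, mul_comm]
  simp [blochState, povmElt, dotSigma, sigmaX, sigmaY, sigmaZ, Matrix.trace,
    Matrix.mul_apply, Fin.sum_univ_two, Matrix.one_apply, Complex.mul_re, hinner]
  ring

section Povm

variable {ι : Type*} [Fintype ι] {t : ι → ℝ} {m : ι → EuclideanSpace ℝ (Fin 3)}

lemma sum_re_trace_blochState_mul_povmElt (ht : ∑ k, t k = 2) (hm : ∑ k, t k • m k = 0)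
    (v : EuclideanSpace ℝ (Fin 3)) :
    ∑ k, (blochState v * povmElt (t k) (m k)).trace.re = 1 := by
  have hcross : ∑ k, t k * ⟪v, m k⟫ = 0 := by
    simp only [← real_inner_smul_right, ← inner_sum, hm, inner_zero_right]
  simp only [re_trace_blochState_mul_povmElt, mul_add, mul_one, sum_add_distrib, ← sum_div,
    div_mul_eq_mul_div, ht, hcross]
  norm_num

lemma sum_ne_re_trace_blochState_mul_povmElt [DecidableEq ι] (ht : ∑ k, t k = 2)
    (hm : ∑ k, t k • m k = 0) (v : EuclideanSpace ℝ (Fin 3)) (i : ι) :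
    ∑ k ∈ univ.filter (fun k => k ≠ i), (blochState v * povmElt (t k) (m k)).trace.re
      = 1 - t i / 2 * (1 + ⟪v, m i⟫) := by
  rw [filter_ne', sum_erase_eq_sub (mem_univ i), sum_re_trace_blochState_mul_povmElt ht hm,
    re_trace_blochState_mul_povmElt]

end Povm

section Averaging

variable {E : Type*} [NormedAddCommGroup E] [InnerProductSpace ℝ E] {ι κ : Type*}
  [Fintype ι] [Fintype κ]

lemma sum_sum_mul_one_add_inner_add {b : κ → E} (hb : ∑ j, b j = 0) (a : ι → E) (m : ι → E)
    (t : ι → ℝ) (ht : ∑ i, t i = 2) :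
    ∑ i, ∑ j, t i / 2 * (1 + ⟪a i + b j, m i⟫)
      = Fintype.card κ * (1 + (∑ i, t i * ⟪a i, m i⟫) / 2) := by
  have hrow (i : ι) : ∑ j, (1 + ⟪a i + b j, m i⟫) = Fintype.card κ * (1 + ⟪a i, m i⟫) := by
    have hcross : ∑ j, ⟪b j, m i⟫ = 0 := by rw [← sum_inner, hb, inner_zero_left]
    simp only [inner_add_left, sum_add_distrib, hcross, add_zero, sum_const, card_univ,
      nsmul_eq_mul, mul_add, mul_one]
  calc ∑ i, ∑ j, t i / 2 * (1 + ⟪a i + b j, m i⟫)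
      = Fintype.card κ * ((∑ i, t i) / 2 + (∑ i, t i * ⟪a i, m i⟫) / 2) := by
        simp only [← mul_sum, hrow]
        rw [sum_div, sum_div, ← sum_add_distrib, mul_sum]
        exact sum_congr rfl fun i _ => by ring
    _ = Fintype.card κ * (1 + (∑ i, t i * ⟪a i, m i⟫) / 2) := by rw [ht]; norm_num

end Averaging

theorem porec23_success_eq_F_general
    (a b : ZMod 3 → EuclideanSpace ℝ (Fin 3))
    (ha_sum : ∑ l : ZMod 3, a l = 0) (hb_sum : ∑ l : ZMod 3, b l = 0)
    (t₁ t₂ : ZMod 3 → ℝ)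
    (ht₁_sum : ∑ k : ZMod 3, t₁ k = 2) (ht₂_sum : ∑ k : ZMod 3, t₂ k = 2)
    (mhat₁ mhat₂ : ZMod 3 → EuclideanSpace ℝ (Fin 3))
    (hm₁_sum : ∑ k : ZMod 3, t₁ k • mhat₁ k = 0)
    (hm₂_sum : ∑ k : ZMod 3, t₂ k • mhat₂ k = 0) :
    (1 / 18 : ℝ) *
        ∑ x : ZMod 3 × ZMod 3,
          ((∑ c ∈ Finset.univ.filter (fun c => c ≠ x.1),
              ((blochState (a x.1 + b x.2) * povmElt (t₁ c) (mhat₁ c)).trace.re)) +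
           (∑ c ∈ Finset.univ.filter (fun c => c ≠ x.2),
              ((blochState (a x.1 + b x.2) * povmElt (t₂ c) (mhat₂ c)).trace.re)))
      = 2 / 3 -
        ((∑ x₁ : ZMod 3, t₁ x₁ * (inner ℝ (a x₁) (mhat₁ x₁) : ℝ)) +
         (∑ x₂ : ZMod 3, t₂ x₂ * (inner ℝ (b x₂) (mhat₂ x₂) : ℝ))) / 12 := by
  simp only [sum_ne_re_trace_blochState_mul_povmElt ht₁_sum hm₁_sum,
    sum_ne_re_trace_blochState_mul_povmElt ht₂_sum hm₂_sum]
  have miss₁ : ∑ x : ZMod 3 × ZMod 3, t₁ x.1 / 2 * (1 + ⟪a x.1 + b x.2, mhat₁ x.1⟫)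
      = 3 * (1 + (∑ i, t₁ i * ⟪a i, mhat₁ i⟫) / 2) := by
    rw [Fintype.sum_prod_type, sum_sum_mul_one_add_inner_add hb_sum a mhat₁ t₁ ht₁_sum, ZMod.card]
    norm_num
  have miss₂ : ∑ x : ZMod 3 × ZMod 3, t₂ x.2 / 2 * (1 + ⟪a x.1 + b x.2, mhat₂ x.2⟫)
      = 3 * (1 + (∑ j, t₂ j * ⟪b j, mhat₂ j⟫) / 2) := by
    simp only [Fintype.sum_prod_type_right, add_comm (a _)]
    rw [sum_sum_mul_one_add_inner_add ha_sum b mhat₂ t₂ ht₂_sum, ZMod.card]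
    norm_num
  simp only [sub_add_sub_comm, sum_sub_distrib, sum_add_distrib, miss₁, miss₂, sum_const,
    card_univ, Fintype.card_prod, ZMod.card, nsmul_eq_mul]
  ring

/-- **Reduction of the (2,3) POREC success probability to the linear functional `F`.**
For additive zero-sum Bloch preparations `ρ_{x₁x₂} = (I + (a(x₁)+b(x₂))·σ)/2` within the
Bloch ball and three-outcome qubit POVMs `M_{k|y} = (t_{k|y}/2)(I + m̂_{k|y}·σ)`, the POREC
success probability equals `2/3 − F/12` with
`F = Σ_{x₁} t_{x₁|1} (a(x₁)·m̂_{x₁|1}) + Σ_{x₂} t_{x₂|2} (b(x₂)·m̂_{x₂|2})`. -/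
theorem porec23_success_eq_F
    (a b : ZMod 3 → EuclideanSpace ℝ (Fin 3))
    (ha_sum : ∑ l : ZMod 3, a l = 0) (hb_sum : ∑ l : ZMod 3, b l = 0)
    (hball : ∀ x₁ x₂ : ZMod 3, ‖a x₁ + b x₂‖ ≤ 1)
    (t₁ t₂ : ZMod 3 → ℝ)
    (ht₁_nonneg : ∀ k, 0 ≤ t₁ k) (ht₂_nonneg : ∀ k, 0 ≤ t₂ k)
    (ht₁_sum : ∑ k : ZMod 3, t₁ k = 2) (ht₂_sum : ∑ k : ZMod 3, t₂ k = 2)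
    (mhat₁ mhat₂ : ZMod 3 → EuclideanSpace ℝ (Fin 3))
    (hm₁_unit : ∀ k, ‖mhat₁ k‖ = 1) (hm₂_unit : ∀ k, ‖mhat₂ k‖ = 1)
    (hm₁_sum : ∑ k : ZMod 3, t₁ k • mhat₁ k = 0)
    (hm₂_sum : ∑ k : ZMod 3, t₂ k • mhat₂ k = 0) :
    (1 / 18 : ℝ) *
        ∑ x : ZMod 3 × ZMod 3,
          ((∑ c ∈ Finset.univ.filter (fun c => c ≠ x.1),
              ((blochState (a x.1 + b x.2) * povmElt (t₁ c) (mhat₁ c)).trace.re)) +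
           (∑ c ∈ Finset.univ.filter (fun c => c ≠ x.2),
              ((blochState (a x.1 + b x.2) * povmElt (t₂ c) (mhat₂ c)).trace.re)))
      = 2 / 3 -
        ((∑ x₁ : ZMod 3, t₁ x₁ * (inner ℝ (a x₁) (mhat₁ x₁) : ℝ)) +
         (∑ x₂ : ZMod 3, t₂ x₂ * (inner ℝ (b x₂) (mhat₂ x₂) : ℝ))) / 12 :=
  porec23_success_eq_F_general a b ha_sum hb_sum t₁ t₂ ht₁_sum ht₂_sum mhat₁ mhat₂ hm₁_sum hm₂_sum

end
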